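/- arXiv:1507.05643 — 2 statements merged into one kernel-verified Lean document; each statement's English description precedes it below -/
import Mathlib

section
/- Let E_1, ..., E_n be pairwise distinct real numbers such that the nonzero gaps are non-degenerate, i.e., whenever E_β − E_α = E_γ − E_σ with α ≠ β and σ ≠ γ, one has (α,β) = (σ,γ). Then for all indices α, β, γ, σ, the long-time average of exp(−iτ(E_β − E_α + E_γ − E_σ)) equals δ_{αβ}δ_{σγ} + δ_{σβ}δ_{γα} − δ_{αβ}δ_{βγ}δ_{γσ} (where δ is the Kronecker delta on indices). -/
/-!
The phase `E β - E α + E γ - E σ` has long-time average `1` if it vanishes and `0` otherwise,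
since for `θ ≠ 0` the integral `∫₀ᵀ exp(-iτθ) dτ` stays bounded by `2 / |θ|`. Non-resonance
says exactly when the phase vanishes: either both gaps are trivial (`α = β`, `σ = γ`) or they
cancel (`σ = β`, `γ = α`); the Kronecker expression is inclusion–exclusion for these two cases.
-/

open Filter Complex Topology

theorem norm_integral_cexp_neg_I_mul_le {θ : ℝ} (hθ : θ ≠ 0) (T : ℝ) :
    ‖∫ τ in (0:ℝ)..T, cexp (-(I * (τ * θ)))‖ ≤ 2 / |θ| := by
  have hc : -(I * θ) ≠ 0 := by simpa using hθ
  have hunit : ‖cexp (-(I * θ) * T)‖ = 1 := by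
    rw [show -(I * θ) * T = ((-(θ * T) : ℝ) : ℂ) * I by push_cast; ring]
    exact norm_exp_ofReal_mul_I _
  calc ‖∫ τ in (0:ℝ)..T, cexp (-(I * (τ * θ)))‖
      = ‖(cexp (-(I * θ) * T) - 1) / (-(I * θ))‖ := by
        simp_rw [show ∀ τ : ℝ, -(I * (τ * θ)) = -(I * θ) * τ from fun τ => by ring]
        rw [integral_exp_mul_complex hc]
        simp
    _ ≤ (‖cexp (-(I * θ) * T)‖ + ‖(1:ℂ)‖) / |θ| := by
        rw [norm_div]
        gcongr
        · exact norm_sub_le _ _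
        · simp
    _ = 2 / |θ| := by rw [hunit]; norm_num

theorem tendsto_inv_mul_zero_of_norm_le {f : ℝ → ℂ} {C : ℝ} (hf : ∀ T, ‖f T‖ ≤ C) :
    Tendsto (fun T : ℝ => ((1 / T : ℝ) : ℂ) * f T) atTop (𝓝 0) := by
  have hinv : Tendsto (fun T : ℝ => ((1 / T : ℝ) : ℂ)) atTop (𝓝 0) := by
    simpa [Function.comp_def] using (continuous_ofReal.tendsto 0).comp tendsto_inv_atTop_zero
  exact hinv.zero_mul_isBoundedUnder_le (isBoundedUnder_of ⟨C, hf⟩)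

theorem tendsto_average_cexp_neg_I_mul (θ : ℝ) :
    Tendsto (fun T : ℝ => ((1 / T : ℝ) : ℂ) * ∫ τ in (0:ℝ)..T, cexp (-(I * (τ * θ)))) atTop
      (𝓝 (if θ = 0 then 1 else 0)) := by
  by_cases hθ : θ = 0
  · subst hθ
    refine tendsto_const_nhds.congr' ?_
    filter_upwards [eventually_ne_atTop (0:ℝ)] with T hT
    simp [hT]
  · rw [if_neg hθ]
    exact tendsto_inv_mul_zero_of_norm_le (norm_integral_cexp_neg_I_mul_le hθ)

section Nonresonant

variable {ι G : Type*} [AddCommGroup G]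

def Nonresonant (E : ι → G) : Prop :=
  ∀ α β γ σ : ι, α ≠ β → σ ≠ γ → E β - E α = E γ - E σ → (α, β) = (σ, γ)

variable {E : ι → G}

/-- A coincidence `E α = E β` would make the gaps of `(α, β)` and `(β, α)` both zero. -/
theorem Nonresonant.injective (hE : Nonresonant E) : Function.Injective E := by
  intro α β h
  by_contra hne
  have := hE α β α β hne (Ne.symm hne) (by rw [h])
  exact hne (Prod.ext_iff.mp this).1

theorem Nonresonant.sub_add_sub_eq_zero_iff (hE : Nonresonant E) {α β γ σ : ι} :
    E β - E α + E γ - E σ = 0 ↔ (α = β ∧ σ = γ) ∨ (σ = β ∧ γ = α) := by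
  constructor
  · intro h
    by_cases hαβ : α = β
    · subst hαβ
      exact Or.inl ⟨rfl, (hE.injective (eq_of_sub_eq_zero (by rw [← h]; abel))).symm⟩
    by_cases hσγ : σ = γ
    · subst hσγ
      exact absurd (hE.injective (eq_of_sub_eq_zero (by rw [← h]; abel))).symm hαβ
    have hpair := hE α β σ γ hαβ (Ne.symm hσγ) (eq_of_sub_eq_zero (by rw [← h]; abel))
    simp only [Prod.mk.injEq] at hpair
    exact Or.inr ⟨hpair.2.symm, hpair.1.symm⟩
  · rintro (⟨rfl, rfl⟩ | ⟨rfl, rfl⟩) <;> abel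

end Nonresonant

theorem ite_or_eq_kronecker {ι R : Type*} [DecidableEq ι] [Ring R] (α β γ σ : ι) :
    (if (α = β ∧ σ = γ) ∨ (σ = β ∧ γ = α) then (1 : R) else 0)
      = (if α = β then (1 : R) else 0) * (if σ = γ then 1 else 0)
        + (if σ = β then 1 else 0) * (if γ = α then 1 else 0)
        - (if α = β then 1 else 0) * (if β = γ then 1 else 0) * (if γ = σ then 1 else 0) := by
  by_cases hαβ : α = β <;> by_cases hσγ : σ = γ <;> by_cases hσβ : σ = β <;>
    by_cases hγα : γ = α <;> simp_all [eq_comm]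

theorem longtime_avg_exp_nonresonant_general
    {n : ℕ} (E : Fin n → ℝ)
    (hnr : ∀ α β γ σ : Fin n, α ≠ β → σ ≠ γ →
      E β - E α = E γ - E σ → (α, β) = (σ, γ))
    (α β γ σ : Fin n) :
    Tendsto (fun T : ℝ => ((1 / T : ℝ) : ℂ) * ∫ τ in (0:ℝ)..T,
        Complex.exp (-(Complex.I * (τ * (E β - E α + E γ - E σ))))) atTop
      (nhds ((if α = β then (1:ℂ) else 0) * (if σ = γ then 1 else 0)
        + (if σ = β then 1 else 0) * (if γ = α then 1 else 0)
        - (if α = β then 1 else 0) * (if β = γ then 1 else 0) * (if γ = σ then 1 else 0))) := by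
  have hlim := tendsto_average_cexp_neg_I_mul (E β - E α + E γ - E σ)
  rw [if_congr (Nonresonant.sub_add_sub_eq_zero_iff hnr) rfl rfl, ite_or_eq_kronecker] at hlim
  exact_mod_cast hlim

theorem longtime_avg_exp_nonresonant
    {n : ℕ} (E : Fin n → ℝ) (hinj : Function.Injective E)
    (hnr : ∀ α β γ σ : Fin n, α ≠ β → σ ≠ γ →
      E β - E α = E γ - E σ → (α, β) = (σ, γ))
    (α β γ σ : Fin n) :
    Tendsto (fun T : ℝ => ((1 / T : ℝ) : ℂ) * ∫ τ in (0:ℝ)..T,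
        Complex.exp (-(Complex.I * (τ * (E β - E α + E γ - E σ))))) atTop
      (nhds ((if α = β then (1:ℂ) else 0) * (if σ = γ then 1 else 0)
        + (if σ = β then 1 else 0) * (if γ = α then 1 else 0)
        - (if α = β then 1 else 0) * (if β = γ then 1 else 0) * (if γ = σ then 1 else 0))) :=
  longtime_avg_exp_nonresonant_general E hnr α β γ σ
end

section
/- Let ψ be a unit vector in a finite-dimensional Hilbert space, H = ∑_{α=1}^{n} E_α Π_α a self-adjoint operator with distinct eigenvalues E_α and orthogonal spectral projections Π_α, and P an orthogonal projection of rank d in dimension D. Then the long-time average L = lim_{T→∞}(1/T)∫_0^T |‖P e^{−iτH}ψ‖² − d/D|² dτ satisfies L = ∑_{α≠β} |⟨φ̃_α, P φ̃_β⟩|² + (∑_α ⟨φ̃_α, P φ̃_α⟩ − d/D)² + L₃^{(r)}, where φ̃_α = Π_α ψ and L₃^{(r)} = ∑_F ∑_{(α,σ)∈𝔉_F} ∑_{(β,γ)∈𝔉_F, (β,γ)∉{(α,σ),(σ,α)}} ⟨φ̃_α, P φ̃_β⟩⟨φ̃_σ, P φ̃_γ⟩, with 𝔉_F = {(α,γ)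 : E_α + E_γ = F}. -/
/-!
Put `c α β = ⟪Π_α ψ, P Π_β ψ⟫`. Since `P` is an orthogonal projection,
`‖P e^{-iτH} ψ‖² = ⟪e^{-iτH} ψ, P e^{-iτH} ψ⟫ = ∑_{α,β} c α β e^{i(E_α - E_β)τ}`, so the deviation
from `d/D` is a trigonometric polynomial whose frequencies are the Bohr frequencies `E_α - E_β`,
together with frequency `0` for the constant `-d/D`. The time average of `e^{iθτ}` vanishes unless
`θ = 0`, hence the long-time average of `|∑_k b_k e^{iθ_k τ}|²` is `∑_{θ_k = θ_l} b_k conj b_l`.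
Sorting these resonant pairs gives the formula: `E_α - E_β = E_γ - E_σ` says that `(β, γ)` lies in
the shell `𝔉_F` of `(α, σ)`, `F = E_α + E_σ`; its two trivial members `(α, σ)` and `(σ, α)` produce
`(∑_α c α α)²` and `∑_{α ≠ σ} |c α σ|²`, and since the `E_α` are distinct only the diagonal
pairs resonate with the constant, which yields the cross terms with `d/D`.
-/

open MeasureTheory Filter Module

open Finset Complex
open scoped ComplexConjugate Topology

lemma tendsto_average_cexp_ofReal_mul_I (θ : ℝ) :
    Tendsto (fun T : ℝ => (1 / T) • ∫ τ in (0 : ℝ)..T, cexp (θ * τ * I)) atTop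
      (𝓝 (if θ = 0 then 1 else 0)) := by
  split_ifs with hθ
  · subst hθ
    refine tendsto_const_nhds.congr' ?_
    filter_upwards [eventually_ne_atTop 0] with T hT
    simp [hT]
  · have hθI : (θ : ℂ) * I ≠ 0 := by simp [hθ]
    have hbound : ∀ T : ℝ, ‖∫ τ in (0 : ℝ)..T, cexp (θ * τ * I)‖ ≤ 2 / ‖(θ : ℂ) * I‖ := by
      intro T
      simp_rw [mul_right_comm _ _ I]
      rw [integral_exp_mul_complex hθI, norm_div, ofReal_zero, mul_zero, exp_zero]
      gcongr
      calc ‖cexp (θ * I * T) - 1‖ ≤ ‖cexp (θ * I * T)‖ + ‖(1 : ℂ)‖ := norm_sub_le _ _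
        _ = 2 := by rw [mul_right_comm, ← ofReal_mul, norm_exp_ofReal_mul_I]; norm_num
    simpa only [one_div] using
      tendsto_inv_atTop_zero.zero_smul_isBoundedUnder_le (isBoundedUnder_of ⟨_, hbound⟩)

section TrigonometricPolynomial

variable {ι : Type*} [Fintype ι]

lemma tendsto_average_sum_cexp (a : ι → ℂ) (θ : ι → ℝ) :
    Tendsto (fun T : ℝ => (1 / T) • ∫ τ in (0 : ℝ)..T, ∑ k, a k * cexp (θ k * τ * I)) atTop
      (𝓝 (∑ k, if θ k = 0 then a k else 0)) := by
  have hsplit : ∀ T : ℝ, (1 / T) • ∫ τ in (0 : ℝ)..T, ∑ k, a k * cexp (θ k * τ * I) =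
      ∑ k, a k * (1 / T) • ∫ τ in (0 : ℝ)..T, cexp (θ k * τ * I) := by
    intro T
    rw [intervalIntegral.integral_finsetSum fun k _ => by
      apply Continuous.intervalIntegrable; fun_prop]
    simp only [intervalIntegral.integral_const_mul, smul_sum, mul_smul_comm]
  simp only [hsplit]
  refine tendsto_finsetSum _ fun k _ => ?_
  simpa only [mul_ite, mul_one, mul_zero] using
    (tendsto_average_cexp_ofReal_mul_I (θ k)).const_mul (a k)

lemma norm_sum_cexp_sq (b : ι → ℂ) (θ : ι → ℝ) (τ : ℝ) :
    ‖∑ k, b k * cexp (θ k * τ * I)‖ ^ 2 =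
      (∑ kl : ι × ι, b kl.1 * conj (b kl.2) * cexp (↑(θ kl.1 - θ kl.2) * τ * I)).re := by
  have hphase : ∀ k l, cexp (θ k * τ * I) * conj (cexp (θ l * τ * I)) =
      cexp (↑(θ k - θ l) * τ * I) := by
    intro k l
    rw [← exp_conj, ← exp_add]
    simp only [map_mul, conj_ofReal, conj_I]
    push_cast
    ring_nf
  rw [← ofReal_re (_ ^ 2), ofReal_pow, ← mul_conj', map_sum, sum_mul_sum, Fintype.sum_prod_type]
  refine congrArg re (sum_congr rfl fun k _ => sum_congr rfl fun l _ => ?_)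
  rw [map_mul, ← hphase]
  ring

lemma tendsto_average_norm_sum_cexp_sq (b : ι → ℂ) (θ : ι → ℝ) :
    Tendsto (fun T : ℝ => (1 / T) * ∫ τ in (0 : ℝ)..T, ‖∑ k, b k * cexp (θ k * τ * I)‖ ^ 2) atTop
      (𝓝 (∑ k, ∑ l, if θ k = θ l then (b k * conj (b l)).re else 0)) := by
  have hre : ∀ T : ℝ, (1 / T) * ∫ τ in (0 : ℝ)..T, ‖∑ k, b k * cexp (θ k * τ * I)‖ ^ 2 =
      ((1 / T) • ∫ τ in (0 : ℝ)..T,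
        ∑ kl : ι × ι, b kl.1 * conj (b kl.2) * cexp (↑(θ kl.1 - θ kl.2) * τ * I)).re := by
    intro T
    simp_rw [norm_sum_cexp_sq, ← RCLike.re_to_complex]
    rw [intervalIntegral.intervalIntegral_re (by apply Continuous.intervalIntegrable; fun_prop)]
    simp
  simp only [hre]
  convert (continuous_re.tendsto _).comp (tendsto_average_sum_cexp
    (fun kl : ι × ι => b kl.1 * conj (b kl.2)) (fun kl => θ kl.1 - θ kl.2)) using 2
  · rfl
  · simp only [Fintype.sum_prod_type, re_sum, apply_ite re, zero_re, sub_eq_zero]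

end TrigonometricPolynomial

section ResonantPairs

variable {ι : Type*} [Fintype ι] [DecidableEq ι]

lemma sum_energy_shell {R : Type*} [CommRing R] (E : ι → ℝ) (c : ι → ι → R) (α σ : ι) :
    ∑ β, ∑ γ, (if E β + E γ = E α + E σ then c α β * c σ γ else 0) =
      (∑ β, ∑ γ, if E β + E γ = E α + E σ ∧ (β, γ) ≠ (α, σ) ∧ (β, γ) ≠ (σ, α) then
          c α β * c σ γ else 0)
        + c α α * c σ σ + if α ≠ σ then c α σ * c σ α else 0 := by
  let shell := univ.filter fun p : ι × ι => E p.1 + E p.2 = E α + E σ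
  have hsub : {(α, σ), (σ, α)} ⊆ shell := by
    intro p hp
    simp only [mem_insert, mem_singleton] at hp
    rcases hp with rfl | rfl <;> simp [shell, add_comm]
  have hfilter : univ.filter (fun p : ι × ι => E p.1 + E p.2 = E α + E σ ∧ p ≠ (α, σ) ∧ p ≠ (σ, α))
      = shell \ {(α, σ), (σ, α)} := by
    ext p
    simp [shell]
  rw [← Fintype.sum_prod_type', ← Fintype.sum_prod_type', ← sum_filter, ← sum_filter, hfilter,
    ← sum_sdiff hsub, add_assoc]
  congr 1
  by_cases h : α = σ
  · subst h; simp
  · rw [sum_pair (by simp [h]), if_pos h]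

lemma sum_resonant_pairs (E : ι → ℝ) (c : ι → ι → ℂ) (hc : ∀ α β, conj (c α β) = c β α) :
    ∑ k : ι × ι, ∑ l : ι × ι,
        (if E k.1 - E k.2 = E l.1 - E l.2 then (c k.1 k.2 * conj (c l.1 l.2)).re else 0) =
      (∑ α, ∑ β, if α ≠ β then ‖c α β‖ ^ 2 else 0) + (∑ α, (c α α).re) ^ 2
        + (∑ α, ∑ σ, ∑ β, ∑ γ, if E β + E γ = E α + E σ ∧ (β, γ) ≠ (α, σ) ∧ (β, γ) ≠ (σ, α) then
            c α β * c σ γ else 0).re := by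
  have hshell : ∑ k : ι × ι, ∑ l : ι × ι,
      (if E k.1 - E k.2 = E l.1 - E l.2 then (c k.1 k.2 * conj (c l.1 l.2)).re else 0) =
        (∑ α, ∑ σ, ∑ β, ∑ γ, if E β + E γ = E α + E σ then c α β * c σ γ else 0).re := by
    simp only [Fintype.sum_prod_type, re_sum, apply_ite re, zero_re, hc]
    refine sum_congr rfl fun α _ => ?_
    conv_rhs => rw [sum_comm]
    refine sum_congr rfl fun β _ => ?_
    rw [sum_comm]
    refine sum_congr rfl fun γ _ => sum_congr rfl fun σ _ => ?_
    exact if_congr (by constructor <;> intro h <;> linarith) rfl rfl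
  have hdiag : ∀ α, ((c α α).re : ℂ) = c α α := fun α => conj_eq_iff_re.mp (hc α α)
  have hswap : ∀ α β, (c α β * c β α).re = ‖c α β‖ ^ 2 := fun α β => by
    rw [← hc α β, mul_conj', ← ofReal_pow, ofReal_re]
  have htrace : ∑ α, c α α = ((∑ α, (c α α).re : ℝ) : ℂ) := by
    push_cast
    exact sum_congr rfl fun α _ => (hdiag α).symm
  rw [hshell]
  simp only [sum_energy_shell, sum_add_distrib, add_re, ← sum_mul_sum, ← sq, htrace,
    ← ofReal_pow, ofReal_re, re_sum, apply_ite re, zero_re, hswap]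
  ring

/-- The deviation `⟪v, P v⟫ - q` as a trigonometric polynomial: `none` indexes the constant `-q`,
`some (α, β)` the Bohr frequency `E α - E β`. It is reducible so that the decidability instances
of `if deviationFreq E k = deviationFreq E l` unify with those of the unfolded conditions. -/
abbrev deviationFreq (E : ι → ℝ) : Option (ι × ι) → ℝ
  | none => 0
  | some p => E p.1 - E p.2

def deviationAmp (c : ι → ι → ℂ) (q : ℝ) : Option (ι × ι) → ℂ
  | none => -q
  | some p => c p.1 p.2

lemma sum_ite_sub_eq_zero_of_injective {E : ι → ℝ} (hE : Function.Injective E) (f : ι → ι → ℝ) :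
    ∑ p : ι × ι, (if E p.1 - E p.2 = 0 then f p.1 p.2 else 0) = ∑ α, f α α := by
  simp [Fintype.sum_prod_type, sub_eq_zero, hE.eq_iff]

lemma sum_resonant_deviation {E : ι → ℝ} (hE : Function.Injective E) (c : ι → ι → ℂ)
    (hc : ∀ α β, conj (c α β) = c β α) (q : ℝ) :
    ∑ k, ∑ l, (if deviationFreq E k = deviationFreq E l then
        (deviationAmp c q k * conj (deviationAmp c q l)).re else 0) =
      (∑ α, ∑ β, if α ≠ β then ‖c α β‖ ^ 2 else 0) + (∑ α, (c α α).re - q) ^ 2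
        + (∑ α, ∑ σ, ∑ β, ∑ γ, if E β + E γ = E α + E σ ∧ (β, γ) ≠ (α, σ) ∧ (β, γ) ≠ (σ, α) then
            c α β * c σ γ else 0).re := by
  simp only [Fintype.sum_option, deviationFreq, deviationAmp, if_true, sum_add_distrib,
    eq_comm (a := (0 : ℝ))]
  rw [sum_resonant_pairs E c hc, sum_ite_sub_eq_zero_of_injective hE
    (fun α β => (c α β * conj (-(q : ℂ))).re), sum_ite_sub_eq_zero_of_injective hE
    (fun α β => (-(q : ℂ) * conj (c α β)).re)]
  simp only [map_neg, conj_ofReal, mul_neg, neg_mul, neg_neg, neg_re, mul_re, ofReal_re,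
    ofReal_im, conj_re, conj_im, mul_zero, zero_mul, neg_zero, sub_zero, sum_neg_distrib, ← sum_mul,
    ← mul_sum]
  ring

end ResonantPairs

lemma inner_map_self_eq_norm_map_sq {𝕜 V : Type*} [RCLike 𝕜] [NormedAddCommGroup V]
    [InnerProductSpace 𝕜 V] {P : V →ₗ[𝕜] V} (hP : P.IsSymmetric) (hP2 : P ∘ₗ P = P) (v : V) :
    inner 𝕜 v (P v) = (‖P v‖ : 𝕜) ^ 2 := by
  rw [← inner_self_eq_norm_sq_to_K, hP, ← LinearMap.comp_apply, hP2]

section Projection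

variable {ι V : Type*} [Fintype ι] [NormedAddCommGroup V] [InnerProductSpace ℂ V]

lemma inner_sum_phase_map_sum_phase (P : V →ₗ[ℂ] V) (E : ι → ℝ) (u : ι → V) (τ : ℝ) :
    inner ℂ (∑ α, cexp (-(I * (τ * E α))) • u α) (P (∑ β, cexp (-(I * (τ * E β))) • u β)) =
      ∑ p : ι × ι, inner ℂ (u p.1) (P (u p.2)) * cexp (↑(E p.1 - E p.2) * τ * I) := by
  rw [sum_inner, Fintype.sum_prod_type]
  simp only [inner_smul_left, map_sum, map_smul, inner_sum, inner_smul_right]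
  refine sum_congr rfl fun α _ => sum_congr rfl fun β _ => ?_
  rw [← exp_conj, mul_left_comm, ← mul_assoc, ← exp_add, mul_comm]
  congr 2
  simp only [map_neg, map_mul, conj_I, conj_ofReal]
  push_cast
  ring

lemma ofReal_norm_map_sq_sub_eq_sum_deviation {P : V →ₗ[ℂ] V} (hP : P.IsSymmetric)
    (hP2 : P ∘ₗ P = P) (E : ι → ℝ) (u : ι → V) (q τ : ℝ) :
    ((‖P (∑ α, cexp (-(I * (τ * E α))) • u α)‖ ^ 2 - q : ℝ) : ℂ) =
      ∑ o, deviationAmp (fun α β => inner ℂ (u α) (P (u β))) q o *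
        cexp (deviationFreq E o * τ * I) := by
  rw [Fintype.sum_option]
  simp only [deviationAmp, deviationFreq, ofReal_zero, zero_mul, exp_zero, mul_one]
  rw [← inner_sum_phase_map_sum_phase, inner_map_self_eq_norm_map_sq hP hP2, neg_add_eq_sub]
  push_cast
  -- the `RCLike` coercion `ℝ → ℂ` is `Complex.ofReal` only up to unfolding
  rfl

end Projection

theorem longtime_avg_deviation_sq_decomposition_general
    {V : Type*} [NormedAddCommGroup V] [InnerProductSpace ℂ V]
    (D d : ℕ)
    {n : ℕ} (E : Fin n → ℝ) (hinj : Function.Injective E)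
    (Pr : Fin n → (V →ₗ[ℂ] V))
    (P : V →ₗ[ℂ] V) (hPidem : P ∘ₗ P = P)
    (hPsa : ∀ x y : V, (inner ℂ (P x) y : ℂ) = inner ℂ x (P y))
    (ψ : V) :
    Tendsto (fun T : ℝ => (1 / T) * ∫ τ in (0:ℝ)..T,
        |‖P (∑ α, Complex.exp (-(Complex.I * (τ * E α))) • (Pr α ψ))‖ ^ 2 - (d : ℝ) / D| ^ 2)
      atTop
      (nhds
        ((∑ α, ∑ β, if α ≠ β then ‖(inner ℂ (Pr α ψ) (P (Pr β ψ)) : ℂ)‖ ^ 2 else 0)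
          + ((∑ α, (inner ℂ (Pr α ψ) (P (Pr α ψ)) : ℂ).re) - (d : ℝ) / D) ^ 2
          + (∑ α, ∑ σ, ∑ β, ∑ γ,
              if E β + E γ = E α + E σ ∧ (β, γ) ≠ (α, σ) ∧ (β, γ) ≠ (σ, α) then
                (inner ℂ (Pr α ψ) (P (Pr β ψ)) : ℂ) * (inner ℂ (Pr σ ψ) (P (Pr γ ψ)) : ℂ)
              else 0).re)) := by
  set c : Fin n → Fin n → ℂ := fun α β => inner ℂ (Pr α ψ) (P (Pr β ψ))
  have hc : ∀ α β, conj (c α β) = c β α := fun α β => by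
    simp only [c, inner_conj_symm, hPsa]
  have key := tendsto_average_norm_sum_cexp_sq (deviationAmp c (d / D)) (deviationFreq E)
  rw [sum_resonant_deviation hinj c hc] at key
  refine key.congr fun T => ?_
  congr 1
  refine intervalIntegral.integral_congr fun τ _ => ?_
  rw [← ofReal_norm_map_sq_sub_eq_sum_deviation hPsa hPidem, norm_real, Real.norm_eq_abs]

theorem longtime_avg_deviation_sq_decomposition
    {V : Type*} [NormedAddCommGroup V] [InnerProductSpace ℂ V] [FiniteDimensional ℂ V]
    (D d : ℕ) (hD : finrank ℂ V = D) (hDpos : 0 < D)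
    {n : ℕ} (E : Fin n → ℝ) (hinj : Function.Injective E)
    (Pr : Fin n → (V →ₗ[ℂ] V))
    (hsa : ∀ α, ∀ x y : V, (inner ℂ (Pr α x) y : ℂ) = inner ℂ x (Pr α y))
    (horth : ∀ α β, Pr α ∘ₗ Pr β = if α = β then Pr α else 0)
    (hcomplete : ∑ α, Pr α = LinearMap.id)
    (P : V →ₗ[ℂ] V) (hPidem : P ∘ₗ P = P)
    (hPsa : ∀ x y : V, (inner ℂ (P x) y : ℂ) = inner ℂ x (P y))
    (hrank : finrank ℂ (LinearMap.range P) = d)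
    (ψ : V) (hψ : ‖ψ‖ = 1) :
    Tendsto (fun T : ℝ => (1 / T) * ∫ τ in (0:ℝ)..T,
        |‖P (∑ α, Complex.exp (-(Complex.I * (τ * E α))) • (Pr α ψ))‖ ^ 2 - (d : ℝ) / D| ^ 2)
      atTop
      (nhds
        ((∑ α, ∑ β, if α ≠ β then ‖(inner ℂ (Pr α ψ) (P (Pr β ψ)) : ℂ)‖ ^ 2 else 0)
          + ((∑ α, (inner ℂ (Pr α ψ) (P (Pr α ψ)) : ℂ).re) - (d : ℝ) / D) ^ 2
          + (∑ α, ∑ σ, ∑ β, ∑ γ,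
              if E β + E γ = E α + E σ ∧ (β, γ) ≠ (α, σ) ∧ (β, γ) ≠ (σ, α) then
                (inner ℂ (Pr α ψ) (P (Pr β ψ)) : ℂ) * (inner ℂ (Pr σ ψ) (P (Pr γ ψ)) : ℂ)
              else 0).re)) :=
  longtime_avg_deviation_sq_decomposition_general D d E hinj Pr P hPidem hPsa ψ
end
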